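/- Let τ ∈ (−1, 1) and let k₊, k₋, V be positive reals. Define V₊ := (V + 4πτ·k₋/(1 − τ²))/(1 + k₋/k₊) and V₋ := (V − 4πτ·k₊/(1 − τ²))/(1 + k₊/k₋). Then V₊ + V₋ = V, and if V₊ > 0, V₋ > 0, (1 − τ) − 2π·k₊/V₊ ≠ 0 and (1 + τ) − 2π·k₋/V₋ ≠ 0, then (1 − τ)·(k₊/V₊) / (1 − τ − 2π·k₊/V₊) = (1 + τ)·(k₋/V₋) / (1 + τ − 2π·k₋/V₋). -/

import Mathlib

/-!
The pressure `p = a ν / (a - c ν)` of a single gas has reciprocal `1/p = 1/ν - c/a`, which is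
affine in the specific volume `1/ν = V/k`. Equal pressures therefore amount to
`V₊/k₊ - V₋/k₋ = 2π/(1 - τ) - 2π/(1 + τ) = 4πτ/(1 - τ²)`, and the given `V₊, V₋` are exactly
the split of `V` with this difference of specific volumes.
-/

open Real

variable {K : Type*} [Field K]

def gasPressure (a c k V : K) : K := a * (k / V) / (a - c * k / V)

theorem inv_gasPressure {a c k V : K} (ha : a ≠ 0) (hk : k ≠ 0) (hV : V ≠ 0) :
    (gasPressure a c k V)⁻¹ = V / k - c / a := by
  unfold gasPressure
  field_simp

theorem div_one_add_div {x p m : K} (hp : p ≠ 0) : x / (1 + m / p) = x * p / (p + m) := by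
  rw [one_add_div hp, div_div_eq_mul_div]

section SplitVolume

variable {V b d kp km : K} (hkp : kp ≠ 0) (hkm : km ≠ 0) (hk : kp + km ≠ 0)
include hkp hkm hk

theorem split_volume_add :
    (V + b * km / d) / (1 + km / kp) + (V - b * kp / d) / (1 + kp / km) = V := by
  rw [div_one_add_div hkp, div_one_add_div hkm, add_comm km kp, ← add_div, div_eq_iff hk]
  field_simp
  ring

theorem split_volume_div_sub_div :
    (V + b * km / d) / (1 + km / kp) / kp - (V - b * kp / d) / (1 + kp / km) / km = b / d := by
  rw [div_one_add_div hkp, div_one_add_div hkm, add_comm km kp]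
  field_simp
  ring

end SplitVolume

theorem stmt6_general (τ kp km V Vp Vm : ℝ) (hτ1 : -1 < τ) (hτ2 : τ < 1)
    (hkp : 0 < kp) (hkm : 0 < km)
    (hVp : Vp = (V + 4 * π * τ * km / (1 - τ ^ 2)) / (1 + km / kp))
    (hVm : Vm = (V - 4 * π * τ * kp / (1 - τ ^ 2)) / (1 + kp / km)) :
    Vp + Vm = V ∧
      (0 < Vp → 0 < Vm →
        (1 - τ) - 2 * π * kp / Vp ≠ 0 → (1 + τ) - 2 * π * km / Vm ≠ 0 →
        (1 - τ) * (kp / Vp) / ((1 - τ) - 2 * π * kp / Vp) =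
          (1 + τ) * (km / Vm) / ((1 + τ) - 2 * π * km / Vm)) := by
  have hsub : (1 : ℝ) - τ ≠ 0 := by linarith
  have hadd : (1 : ℝ) + τ ≠ 0 := by linarith
  have hk : kp + km ≠ 0 := by positivity
  refine ⟨hVp ▸ hVm ▸ split_volume_add hkp.ne' hkm.ne' hk, fun hp hm _ _ => ?_⟩
  change gasPressure (1 - τ) (2 * π) kp Vp = gasPressure (1 + τ) (2 * π) km Vm
  rw [← inv_inj, inv_gasPressure hsub hkp.ne' hp.ne', inv_gasPressure hadd hkm.ne' hm.ne']
  have hspecific : Vp / kp - Vm / km = 4 * π * τ / (1 - τ ^ 2) :=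
    hVp ▸ hVm ▸ split_volume_div_sub_div hkp.ne' hkm.ne' hk
  have hcovolume : 2 * π / (1 - τ) - 2 * π / (1 + τ) = 4 * π * τ / (1 - τ ^ 2) := by
    rw [show (1 : ℝ) - τ ^ 2 = (1 - τ) * (1 + τ) by ring]
    field_simp
    ring
  linear_combination hspecific - hcovolume

/-- The partial volumes `V₊, V₋` split the total volume `V` and equalize the
pressures of the separated vortex and antivortex gases. -/
theorem stmt6 (τ kp km V Vp Vm : ℝ) (hτ1 : -1 < τ) (hτ2 : τ < 1)
    (hkp : 0 < kp) (hkm : 0 < km) (hV : 0 < V)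
    (hVp : Vp = (V + 4 * π * τ * km / (1 - τ ^ 2)) / (1 + km / kp))
    (hVm : Vm = (V - 4 * π * τ * kp / (1 - τ ^ 2)) / (1 + kp / km)) :
    Vp + Vm = V ∧
      (0 < Vp → 0 < Vm →
        (1 - τ) - 2 * π * kp / Vp ≠ 0 → (1 + τ) - 2 * π * km / Vm ≠ 0 →
        (1 - τ) * (kp / Vp) / ((1 - τ) - 2 * π * kp / Vp) =
          (1 + τ) * (km / Vm) / ((1 + τ) - 2 * π * km / Vm)) :=
  stmt6_general τ kp km V Vp Vm hτ1 hτ2 hkp hkm hVp hVm
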